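/- arXiv:2309.03495 — 6 statements merged into one kernel-verified Lean document; each statement's English description precedes it below -/
import Mathlib

section
/- Let H : [1,∞) → ℝ and define E : ℝ^{2×2}_+ → ℝ by E(A) = H(K_A). If E is rank-one convex, then H is convex and non-decreasing on [1,∞), and E is polyconvex. -/
open MeasureTheory Matrix

noncomputable section

/-- Operator norm of a 2×2 real matrix as a linear map of Euclidean ℝ². -/
def opNorm (A : Matrix (Fin 2) (Fin 2) ℝ) : ℝ :=
  ‖Matrix.toEuclideanCLM (𝕜 := ℝ) A‖

/-- The Burkholder functional. -/
def Bp (p : ℝ) (A : Matrix (Fin 2) (Fin 2) ℝ) : ℝ :=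
  ((p / 2 - 1) * opNorm A ^ 2 - p / 2 * A.det) * opNorm A ^ (p - 2)

/-- The functional 𝒲. -/
def Wfun (A : Matrix (Fin 2) (Fin 2) ℝ) : ℝ :=
  opNorm A ^ 2 / A.det - Real.log (opNorm A ^ 2 / A.det) + Real.log A.det

/-- The functional ℱ. -/
def Ffun (A : Matrix (Fin 2) (Fin 2) ℝ) : ℝ :=
  opNorm A ^ 2 - (1 + Real.log (opNorm A ^ 2)) * A.det

/-- A 2×2 real matrix acting on ℂ ≅ ℝ². -/
def mApply (A : Matrix (Fin 2) (Fin 2) ℝ) (z : ℂ) : ℂ :=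
  ⟨A 0 0 * z.re + A 0 1 * z.im, A 1 0 * z.re + A 1 1 * z.im⟩

/-- The 2×2 real matrix of an ℝ-linear map ℂ → ℂ in the basis (1, i). -/
def clmToMatrix (T : ℂ →L[ℝ] ℂ) : Matrix (Fin 2) (Fin 2) ℝ :=
  !![(T 1).re, (T Complex.I).re; (T 1).im, (T Complex.I).im]

/-- The total derivative of f : ℂ → ℂ at z, viewed as a 2×2 real matrix. -/
def Dm (f : ℂ → ℂ) (z : ℂ) : Matrix (Fin 2) (Fin 2) ℝ :=
  clmToMatrix (fderiv ℝ f z)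

/-- The matrix of the ℝ-linear map z ↦ z + b·conj z. -/
def Af (b : ℂ) : Matrix (Fin 2) (Fin 2) ℝ :=
  !![1 + b.re, b.im; b.im, 1 - b.re]

/-- Rank-one convexity of a functional on ℝ^{2×2}_+. -/
def RankOneConvexOnPos (E : Matrix (Fin 2) (Fin 2) ℝ → ℝ) : Prop :=
  ∀ A : Matrix (Fin 2) (Fin 2) ℝ, 0 < A.det →
    ∀ X : Matrix (Fin 2) (Fin 2) ℝ, X.rank = 1 →
      ConvexOn ℝ {t : ℝ | 0 < (A + t • X).det} (fun t => E (A + t • X))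

/-- Quasiconvexity of a functional on ℝ^{2×2}_+ tested on C¹ diffeomorphic deformations
with affine boundary values. -/
def QuasiconvexOnPos (E : Matrix (Fin 2) (Fin 2) ℝ → ℝ) : Prop :=
  ∀ A : Matrix (Fin 2) (Fin 2) ℝ, 0 < A.det →
    ∀ Ω : Set ℂ, IsOpen Ω → IsConnected Ω → Bornology.IsBounded Ω →
      ∀ (f : ℂ → ℂ) (U : Set ℂ), IsOpen U → closure Ω ⊆ U → ContDiffOn ℝ 1 f U →
        Set.InjOn f (closure Ω) → (∀ x ∈ closure Ω, 0 < (Dm f x).det) →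
        (∀ x ∈ frontier Ω, f x = mApply A x) →
        E A ≤ (1 / (volume Ω).toReal) * ∫ x in Ω, E (Dm f x)

/-- Rank-one convexity for extended-real-valued functionals on m×n matrices:
convexity along rank-one lines in the epigraph sense. -/
def RankOneConvexE {m n : ℕ} (E : Matrix (Fin m) (Fin n) ℝ → EReal) : Prop :=
  ∀ (A X : Matrix (Fin m) (Fin n) ℝ), X.rank = 1 →
    Convex ℝ {q : ℝ × ℝ | E (A + q.1 • X) ≤ (q.2 : EReal)}

/-- Polyconvexity of a functional on ℝ^{2×2}_+: it is the restriction of a convex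
function (with values in ℝ ∪ {+∞}) of the pair (A, det A). -/
def Polyconvex (F : Matrix (Fin 2) (Fin 2) ℝ → ℝ) : Prop :=
  ∃ Φ : Matrix (Fin 2) (Fin 2) ℝ × ℝ → EReal,
    (∀ q, Φ q ≠ ⊥) ∧
    Convex ℝ {q : (Matrix (Fin 2) (Fin 2) ℝ × ℝ) × ℝ | Φ q.1 ≤ (q.2 : EReal)} ∧
    ∀ A : Matrix (Fin 2) (Fin 2) ℝ, 0 < A.det → Φ (A, A.det) = (F A : EReal)

end

/-! On the rank-one line `t ↦ diag (1 + t, 1)` the distortion `K = ‖A‖² / det A` equals `1 + t`,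
so rank-one convexity of `E = H ∘ K` makes `H` convex. On the shear line `t ↦ !![x, t; 0, 1]` the
determinant is constant and `K` is even in `t`, continuous, equal to `x` at `t = 0` and unbounded,
so `H ∘ K` is a convex even function, minimal at `0`, that takes every value `H y` with `y ≥ x`.
Finally `(A, d) ↦ ‖A‖² / d` is convex on `d > 0`, being a perspective of `‖·‖²`; composing it with
the convex non-decreasing extension `t ↦ H (max t 1)` of `H` gives a convex function of
`(A, det A)` that agrees with `E`, because `det A ≤ ‖A‖²`. -/

open Set

open scoped Matrix.Norms.L2Operator

theorem ConvexOn.apply_zero_le_of_even {E : Type*} [AddCommGroup E] [Module ℝ E] {f : E → ℝ}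
    (hf : ConvexOn ℝ univ f) (he : f.Even) (x : E) : f 0 ≤ f x := by
  have h := hf.2 (mem_univ x) (mem_univ (-x)) (by norm_num : (0 : ℝ) ≤ 1 / 2)
    (by norm_num : (0 : ℝ) ≤ 1 / 2) (by norm_num)
  rw [smul_neg, add_neg_cancel, he x, smul_eq_mul] at h
  linarith

theorem ConvexOn.comp_of_monotone {𝕜 E β γ : Type*} [Semiring 𝕜] [PartialOrder 𝕜]
    [AddCommMonoid E] [AddCommMonoid β] [PartialOrder β] [AddCommMonoid γ] [PartialOrder γ]
    [SMul 𝕜 E] [SMul 𝕜 β] [SMul 𝕜 γ] {s : Set E} {f : E → β} {g : β → γ}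
    (hg : ConvexOn 𝕜 univ g) (hg' : Monotone g) (hf : ConvexOn 𝕜 s f) : ConvexOn 𝕜 s (g ∘ f) :=
  ⟨hf.1, fun _ hx _ hy _ _ ha hb hab =>
    (hg' (hf.2 hx hy ha hb hab)).trans (hg.2 (mem_univ _) (mem_univ _) ha hb hab)⟩

theorem ConvexOn.comp_max_const {H : ℝ → ℝ} {c : ℝ} (hH : ConvexOn ℝ (Ici c) H)
    (hH' : MonotoneOn H (Ici c)) : ConvexOn ℝ univ (fun t => H (max t c)) := by
  have himage : (fun t => max t c) '' univ = Ici c := by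
    ext t
    refine ⟨?_, fun ht => ⟨t, mem_univ t, max_eq_left ht⟩⟩
    rintro ⟨s, -, rfl⟩
    exact le_max_right s c
  refine ConvexOn.comp ?_ ((convexOn_id convex_univ).sup (convexOn_const c convex_univ)) ?_ <;>
    rwa [himage]

theorem MonotoneOn.comp_max_const {H : ℝ → ℝ} {c : ℝ} (hH : MonotoneOn H (Ici c)) :
    Monotone (fun t => H (max t c)) := fun _ _ hst =>
  hH (le_max_right _ c) (le_max_right _ c) (max_le_max_right c hst)

theorem add_sq_div_add_le {a b x y d e : ℝ} (ha : 0 ≤ a) (hb : 0 ≤ b) (hd : 0 < d) (he : 0 < e)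
    (hde : 0 < a * d + b * e) :
    (a * x + b * y) ^ 2 / (a * d + b * e) ≤ a * (x ^ 2 / d) + b * (y ^ 2 / e) := by
  obtain ⟨u, rfl⟩ : ∃ u, x = u * d := ⟨x / d, by field_simp⟩
  obtain ⟨v, rfl⟩ : ∃ v, y = v * e := ⟨y / e, by field_simp⟩
  rw [div_le_iff₀ hde]
  field_simp
  have hab := mul_nonneg (mul_nonneg ha hb) (mul_nonneg hd.le he.le)
  nlinarith [mul_nonneg hab (sq_nonneg (u - v))]

theorem convexOn_norm_sq_div {E : Type*} [SeminormedAddCommGroup E] [NormedSpace ℝ E] :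
    ConvexOn ℝ {p : E × ℝ | 0 < p.2} (fun p => ‖p.1‖ ^ 2 / p.2) := by
  have hconv : Convex ℝ {p : E × ℝ | 0 < p.2} :=
    (convex_Ioi 0).linear_preimage (LinearMap.snd ℝ E ℝ)
  refine ⟨hconv, ?_⟩
  rintro ⟨x, d⟩ hd ⟨y, e⟩ he a b ha hb hab
  have hde : 0 < a * d + b * e := hconv hd he ha hb hab
  calc ‖a • x + b • y‖ ^ 2 / (a * d + b * e)
      ≤ (a * ‖x‖ + b * ‖y‖) ^ 2 / (a * d + b * e) := by
        gcongr
        simpa using convexOn_univ_norm.2 (mem_univ x) (mem_univ y) ha hb hab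
    _ ≤ a * (‖x‖ ^ 2 / d) + b * (‖y‖ ^ 2 / e) :=
        add_sq_div_add_le ha hb hd he hde

theorem Matrix.rank_vecMulVec_of_ne_zero {K m n : Type*} [Field K] [Fintype m] [Fintype n]
    {w : m → K} {v : n → K} (hw : w ≠ 0) (hv : v ≠ 0) : (vecMulVec w v).rank = 1 := by
  refine le_antisymm (rank_vecMulVec_le w v) ?_
  obtain ⟨j, hj⟩ := Function.ne_iff.mp hv
  rw [Nat.one_le_iff_ne_zero, rank_eq_finrank_span_cols, Ne, Submodule.finrank_eq_zero,
    Submodule.span_eq_bot]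
  intro h
  refine hw (funext fun i => ?_)
  have := congrFun (h _ ⟨j, rfl⟩) i
  simp only [col_apply, vecMulVec_apply, Pi.zero_apply, mul_eq_zero] at this
  exact this.resolve_right hj

theorem Matrix.sum_sq_le_l2_opNorm_sq {m n : Type*} [Fintype m] [Fintype n] [DecidableEq n]
    (A : Matrix m n ℝ) (j : n) : ∑ i, A i j ^ 2 ≤ ‖A‖ ^ 2 := by
  have h := l2_opNorm_mulVec A (EuclideanSpace.single j 1)
  rw [PiLp.norm_single, norm_one, mul_one, EuclideanSpace.norm_eq] at h
  have h2 := pow_le_pow_left₀ (Real.sqrt_nonneg _) h 2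
  rw [Real.sq_sqrt (by positivity)] at h2
  simpa using h2

theorem opNorm_eq_norm (A : Matrix (Fin 2) (Fin 2) ℝ) : opNorm A = ‖A‖ := rfl

theorem sq_add_sq_le_opNorm_sq (A : Matrix (Fin 2) (Fin 2) ℝ) (j : Fin 2) :
    A 0 j ^ 2 + A 1 j ^ 2 ≤ opNorm A ^ 2 := by
  simpa [Fin.sum_univ_two, opNorm_eq_norm] using A.sum_sq_le_l2_opNorm_sq j

theorem det_le_opNorm_sq (A : Matrix (Fin 2) (Fin 2) ℝ) : A.det ≤ opNorm A ^ 2 := by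
  have hadamard : A.det ^ 2 ≤ (A 0 0 ^ 2 + A 1 0 ^ 2) * (A 0 1 ^ 2 + A 1 1 ^ 2) := by
    rw [det_fin_two]
    nlinarith [sq_nonneg (A 0 0 * A 0 1 + A 1 0 * A 1 1)]
  have hcols := mul_le_mul (sq_add_sq_le_opNorm_sq A 0) (sq_add_sq_le_opNorm_sq A 1)
    (by positivity) (by positivity)
  exact le_of_sq_le_sq (by linarith) (by positivity)

theorem one_le_opNorm_sq_div_det {A : Matrix (Fin 2) (Fin 2) ℝ} (hA : 0 < A.det) :
    1 ≤ opNorm A ^ 2 / A.det :=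
  (one_le_div hA).mpr (det_le_opNorm_sq A)

theorem opNorm_diagonal_of_one_le {a : ℝ} (ha : 1 ≤ a) : opNorm (diagonal ![a, 1]) = a := by
  rw [opNorm_eq_norm, l2_opNorm_diagonal]
  refine le_antisymm ((pi_norm_le_iff_of_nonneg (by linarith)).mpr fun i => ?_) ?_
  · fin_cases i <;> simp [abs_of_pos (by linarith : 0 < a), ha]
  · simpa [abs_of_pos (by linarith : 0 < a)] using norm_le_pi_norm ![a, 1] 0

theorem det_diagonal_fin_two_one (a : ℝ) : (diagonal ![a, 1]).det = a := by
  simp [Fin.prod_univ_two]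

theorem diagonal_one_neg_one_mem_unitary :
    diagonal ![(1 : ℝ), -1] ∈ unitary (Matrix (Fin 2) (Fin 2) ℝ) := by
  have h : diagonal ![(1 : ℝ), -1] * diagonal ![(1 : ℝ), -1] = 1 := by
    rw [diagonal_mul_diagonal, ← diagonal_one]
    congr 1
    ext i
    fin_cases i <;> simp
  simp [Unitary.mem_iff, star_eq_conjTranspose, h]

theorem opNorm_shear_neg (a t : ℝ) : opNorm !![a, -t; 0, 1] = opNorm !![a, t; 0, 1] := by
  have hconj : !![a, -t; 0, 1] =
      diagonal ![(1 : ℝ), -1] * !![a, t; 0, 1] * diagonal ![(1 : ℝ), -1] := by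
    ext i j
    fin_cases i <;> fin_cases j <;> simp
  rw [hconj, opNorm_eq_norm, CStarRing.norm_mul_mem_unitary _ diagonal_one_neg_one_mem_unitary,
    CStarRing.norm_mem_unitary_mul _ diagonal_one_neg_one_mem_unitary, opNorm_eq_norm]

theorem convexOn_Ici_one_of_rankOneConvexOnPos {H : ℝ → ℝ}
    (hrc : RankOneConvexOnPos (fun A => H (opNorm A ^ 2 / A.det))) :
    ConvexOn ℝ (Ici 1) H := by
  have hline : ∀ t : ℝ,
      (1 : Matrix (Fin 2) (Fin 2) ℝ) + t • vecMulVec ![1, 0] ![1, 0] = diagonal ![1 + t, 1] := by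
    intro t
    ext i j
    fin_cases i <;> fin_cases j <;> simp [one_apply, add_comm]
  have hrank : (vecMulVec ![(1 : ℝ), 0] ![1, 0]).rank = 1 :=
    rank_vecMulVec_of_ne_zero (by simp) (by simp)
  have hK : ∀ t ∈ Ici (0 : ℝ),
      H (opNorm ((1 : Matrix (Fin 2) (Fin 2) ℝ) + t • vecMulVec ![1, 0] ![1, 0]) ^ 2 /
        ((1 : Matrix (Fin 2) (Fin 2) ℝ) + t • vecMulVec ![1, 0] ![1, 0]).det) = H (1 + t) := by
    intro t (ht : 0 ≤ t)
    rw [hline, opNorm_diagonal_of_one_le (by linarith), det_diagonal_fin_two_one, sq,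
      mul_div_cancel_right₀ _ (by linarith)]
  have hdet : Ici (0 : ℝ) ⊆
      {t | 0 < ((1 : Matrix (Fin 2) (Fin 2) ℝ) + t • vecMulVec ![1, 0] ![1, 0]).det} := by
    intro t (ht : 0 ≤ t)
    rw [mem_ofPred_eq, hline, det_diagonal_fin_two_one]
    linarith
  have h := ((hrc 1 (by simp) _ hrank).subset hdet (convex_Ici 0)).congr hK
  simpa [Function.comp_def] using h.translate_right (-1)

theorem monotoneOn_Ici_one_of_rankOneConvexOnPos {H : ℝ → ℝ}
    (hrc : RankOneConvexOnPos (fun A => H (opNorm A ^ 2 / A.det))) :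
    MonotoneOn H (Ici 1) := by
  intro x (hx : 1 ≤ x) y (hy : 1 ≤ y) hxy
  set K : ℝ → ℝ := fun t => opNorm !![x, t; 0, 1] ^ 2 / x
  have hline : ∀ t : ℝ, diagonal ![x, 1] + t • vecMulVec ![1, 0] ![0, 1] = !![x, t; 0, 1] := by
    intro t
    ext i j
    fin_cases i <;> fin_cases j <;> simp
  have hrank : (vecMulVec ![(1 : ℝ), 0] ![0, 1]).rank = 1 :=
    rank_vecMulVec_of_ne_zero (by simp) (by simp)
  have hdet : ∀ t : ℝ, 0 < (diagonal ![x, 1] + t • vecMulVec ![1, 0] ![0, 1]).det := by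
    intro t
    rw [hline, det_fin_two_of]
    linarith
  have hconv : ConvexOn ℝ univ (H ∘ K) := by
    have h := (hrc (diagonal ![x, 1]) (by simpa using hdet 0) _ hrank).subset
      (fun t _ => hdet t) convex_univ
    refine h.congr fun t _ => ?_
    simp only [Function.comp_apply, hline, det_fin_two_of, K, mul_one, mul_zero, sub_zero]
  have heven : (H ∘ K).Even := fun t => by simp [K, opNorm_shear_neg]
  have hK0 : K 0 = x := by
    simp only [K, ← hline 0, zero_smul, add_zero, opNorm_diagonal_of_one_le hx]
    field_simp
  have hKcont : Continuous K := by
    have hcurve : Continuous fun t : ℝ => diagonal ![x, 1] + t • vecMulVec ![1, 0] ![0, 1] :=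
      continuous_const.add (continuous_id.smul continuous_const)
    refine (((continuous_norm.comp hcurve).pow 2).div_const x).congr fun t => ?_
    simp only [Pi.pow_apply, Function.comp_apply, hline, K, opNorm_eq_norm]
  have hKlarge : y ≤ K (x * y) := by
    have hcol : (x * y) ^ 2 + 1 ^ 2 ≤ opNorm !![x, x * y; 0, 1] ^ 2 :=
      sq_add_sq_le_opNorm_sq !![x, x * y; 0, 1] 1
    rw [le_div_iff₀ (by linarith)]
    nlinarith
  obtain ⟨t, -, ht⟩ : ∃ t ∈ Icc 0 (x * y), K t = y :=
    intermediate_value_Icc (by positivity) hKcont.continuousOn ⟨hK0 ▸ hxy, hKlarge⟩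
  calc H x = (H ∘ K) 0 := by simp [hK0]
    _ ≤ (H ∘ K) t := hconv.apply_zero_le_of_even heven t
    _ = H y := by simp [ht]

theorem polyconvex_of_convexOn {F : Matrix (Fin 2) (Fin 2) ℝ → ℝ}
    {s : Set (Matrix (Fin 2) (Fin 2) ℝ × ℝ)} {Ψ : Matrix (Fin 2) (Fin 2) ℝ × ℝ → ℝ}
    (hΨ : ConvexOn ℝ s Ψ) (hs : ∀ A : Matrix (Fin 2) (Fin 2) ℝ, 0 < A.det → (A, A.det) ∈ s)
    (hF : ∀ A : Matrix (Fin 2) (Fin 2) ℝ, 0 < A.det → Ψ (A, A.det) = F A) : Polyconvex F := by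
  classical
  refine ⟨fun q => if q ∈ s then (Ψ q : EReal) else ⊤,
    fun q => by by_cases hq : q ∈ s <;> simp [hq], ?_, fun A hA => by simp [hs A hA, hF A hA]⟩
  convert hΨ.convex_epigraph using 1
  ext ⟨q, r⟩
  by_cases hq : q ∈ s <;> simp [hq]

theorem polyconvex_of_convexOn_of_monotoneOn {H : ℝ → ℝ} (hH : ConvexOn ℝ (Ici 1) H)
    (hH' : MonotoneOn H (Ici 1)) : Polyconvex (fun A => H (opNorm A ^ 2 / A.det)) := by
  have hΨ := (hH.comp_max_const hH').comp_of_monotone hH'.comp_max_const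
    (convexOn_norm_sq_div (E := Matrix (Fin 2) (Fin 2) ℝ))
  refine polyconvex_of_convexOn hΨ (fun A hA => hA) fun A hA => ?_
  change H (max (opNorm A ^ 2 / A.det) 1) = _
  rw [max_eq_left (one_le_opNorm_sq_div_det hA)]

theorem stmt4 (H : ℝ → ℝ)
    (hrc : RankOneConvexOnPos (fun A => H (opNorm A ^ 2 / A.det))) :
    ConvexOn ℝ (Set.Ici 1) H ∧ MonotoneOn H (Set.Ici 1) ∧
      Polyconvex (fun A => H (opNorm A ^ 2 / A.det)) := by
  have hconv := convexOn_Ici_one_of_rankOneConvexOnPos hrc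
  have hmono := monotoneOn_Ici_one_of_rankOneConvexOnPos hrc
  exact ⟨hconv, hmono, polyconvex_of_convexOn_of_monotoneOn hconv hmono⟩
end

section
/- (Baker–Ericksen inequality.) Let E : ℝ^{2×2}_+ → ℝ be rank-one convex and isotropic, and define Φ : (0,∞)² → ℝ by Φ(x,y) = E(diag(x,y)). Assume Φ is continuously differentiable on (0,∞)². Then for all λ₁, λ₂ > 0 one has (λ₁·∂₁Φ(λ₁,λ₂) − λ₂·∂₂Φ(λ₁,λ₂))·(λ₁ − λ₂) ≥ 0; equivalently, (λ₁ ∂₁Φ − λ₂ ∂₂Φ)/(λ₁ − λ₂) ≥ 0 whenever λ₁ ≠ λ₂. -/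
open MeasureTheory Matrix

open MeasureTheory Matrix

/-! On the hyperbola `x * y = a * b`, `E ∘ diagonal` grows away from the diagonal. Indeed the
triangular matrices `!![a, ±τ; 0, b]` have singular values `(x, y)` with `x * y = a * b` and
`x ^ 2 + y ^ 2 = a ^ 2 + b ^ 2 + τ ^ 2`, so by isotropy `E` takes the value `Φ (x, y)` at both,
while `diag(a, b)` is their midpoint on a rank-one line. Hence `s ↦ Φ (λ₁ eˢ, λ₂ e⁻ˢ)`, whose
derivative at `0` is `λ₁ ∂₁Φ - λ₂ ∂₂Φ`, attains its minimum at `0` on the half-line of the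
sign of `λ₁ - λ₂`. -/

open Set

lemma exists_sq_add_sq_eq_one_of_mem_uIcc {x y z : ℝ} (h : z ∈ uIcc x y) :
    ∃ p q : ℝ, p ^ 2 + q ^ 2 = 1 ∧ x * p ^ 2 + y * q ^ 2 = z := by
  rw [← segment_eq_uIcc] at h
  obtain ⟨s, t, hs, ht, hst, rfl⟩ := h
  refine ⟨√s, √t, ?_, ?_⟩ <;>
    simp only [Real.sq_sqrt hs, Real.sq_sqrt ht, smul_eq_mul] <;> linarith

lemma HasDerivAt.mul_nonneg_of_forall_le {f : ℝ → ℝ} {f' x c : ℝ} (hf : HasDerivAt f f' x)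
    (hmin : ∀ s, 0 ≤ (s - x) * c → f x ≤ f s) : 0 ≤ f' * c := by
  have hloc : IsLocalMinOn f {s | 0 ≤ (s - x) * c} x := IsMinOn.localize hmin
  have hc : c ∈ posTangentConeAt {s | 0 ≤ (s - x) * c} x := by
    refine mem_posTangentConeAt_of_segment_subset fun s hs ↦ ?_
    obtain ⟨t, ht, rfl⟩ := (segment_eq_image_lineMap ℝ x (x + c)) ▸ hs
    rw [mem_ofPred_eq, AffineMap.lineMap_apply_module, smul_eq_mul, smul_eq_mul]
    nlinarith [mul_nonneg ht.1 (sq_nonneg c)]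
  simpa [mul_comm] using
    hloc.hasFDerivWithinAt_nonneg hf.hasFDerivAt.hasFDerivWithinAt hc

def IsotropicOnPos (E : Matrix (Fin 2) (Fin 2) ℝ → ℝ) : Prop :=
  ∀ (Q R A : Matrix (Fin 2) (Fin 2) ℝ), Qᵀ * Q = 1 → Q.det = 1 →
    Rᵀ * R = 1 → R.det = 1 → 0 < A.det → E (Q * A * R) = E A

def rotationMatrix (c s : ℝ) : Matrix (Fin 2) (Fin 2) ℝ := !![c, -s; s, c]

section Rotation

variable {c s : ℝ}

lemma rotationMatrix_transpose_mul_self (h : c ^ 2 + s ^ 2 = 1) :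
    (rotationMatrix c s)ᵀ * rotationMatrix c s = 1 := by
  ext i j
  fin_cases i <;> fin_cases j <;> simp [rotationMatrix, mul_apply] <;>
    first | ring1 | linear_combination h

lemma det_rotationMatrix (h : c ^ 2 + s ^ 2 = 1) : (rotationMatrix c s).det = 1 := by
  rw [rotationMatrix, det_fin_two_of]; linear_combination h

end Rotation

lemma rotationMatrix_mul_diagonal_mul_rotationMatrix {x y a p q : ℝ} (ha : a ≠ 0)
    (hpq : p ^ 2 + q ^ 2 = 1) (hxy : x ^ 2 * p ^ 2 + y ^ 2 * q ^ 2 = a ^ 2) :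
    rotationMatrix (x * p / a) (-(y * q / a)) * diagonal ![x, y] * rotationMatrix p q
      = !![a, p * q * (y ^ 2 - x ^ 2) / a; 0, x * y / a] := by
  rw [rotationMatrix, rotationMatrix, diagonal_vec2, mul_fin_two, mul_fin_two]
  ext i j
  fin_cases i <;> fin_cases j <;> simp <;> field_simp <;>
    first | ring1 | linear_combination hxy | linear_combination x * y * hpq

section Functional

variable {E : Matrix (Fin 2) (Fin 2) ℝ → ℝ}

lemma IsotropicOnPos.apply_upperTriangular (hE : IsotropicOnPos E) {x y a p q : ℝ}
    (hx : 0 < x) (hy : 0 < y) (ha : 0 < a) (hpq : p ^ 2 + q ^ 2 = 1)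
    (hxy : x ^ 2 * p ^ 2 + y ^ 2 * q ^ 2 = a ^ 2) :
    E !![a, p * q * (y ^ 2 - x ^ 2) / a; 0, x * y / a] = E (diagonal ![x, y]) := by
  have hQ : (x * p / a) ^ 2 + (-(y * q / a)) ^ 2 = 1 := by
    field_simp; linear_combination hxy
  rw [← rotationMatrix_mul_diagonal_mul_rotationMatrix ha.ne' hpq hxy]
  refine hE _ _ _ (rotationMatrix_transpose_mul_self hQ) (det_rotationMatrix hQ)
    (rotationMatrix_transpose_mul_self hpq) (det_rotationMatrix hpq) ?_
  rw [diagonal_vec2, det_fin_two_of]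
  simp only [mul_zero, sub_zero]
  positivity

lemma rank_single_zero_one : (!![0, 1; 0, 0] : Matrix (Fin 2) (Fin 2) ℝ).rank = 1 := by
  have h : (!![0, 1; 0, 0] : Matrix (Fin 2) (Fin 2) ℝ)
      = (diagonal ![1, 0]).submatrix (Equiv.refl (Fin 2)) (Equiv.swap 0 1) := by
    ext i j
    fin_cases i <;> fin_cases j <;> simp [Matrix.diagonal]
  rw [h, rank_submatrix, rank_diagonal, Fintype.card_eq_one_iff]
  refine ⟨⟨0, by simp⟩, ?_⟩
  rintro ⟨b, hb⟩
  fin_cases b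
  · rfl
  · simp at hb

lemma RankOneConvexOnPos.convexOn_upperTriangular (hE : RankOneConvexOnPos E) {a b : ℝ}
    (ha : 0 < a) (hb : 0 < b) : ConvexOn ℝ univ (fun t ↦ E !![a, t; 0, b]) := by
  have hline : ∀ t : ℝ, diagonal ![a, b] + t • !![0, 1; 0, 0] = !![a, t; 0, b] := by
    intro t
    rw [diagonal_vec2]
    ext i j
    fin_cases i <;> fin_cases j <;> simp
  have hdet : ∀ t : ℝ, (!![a, t; 0, b]).det = a * b := by
    intro t; rw [det_fin_two_of]; ring
  have h := hE (diagonal ![a, b]) (by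
    simpa [diagonal_vec2, det_fin_two_of] using mul_pos ha hb)
    !![0, 1; 0, 0] rank_single_zero_one
  simp only [hline, hdet, mul_pos ha hb, ofPred_true] at h
  exact h

lemma diagonal_le_diagonal_of_mul_eq (hrc : RankOneConvexOnPos E) (hiso : IsotropicOnPos E)
    {a b x y : ℝ} (ha : 0 < a) (hb : 0 < b) (hx : 0 < x) (hy : 0 < y) (hxy : x * y = a * b)
    (hmem : a ^ 2 ∈ uIcc (x ^ 2) (y ^ 2)) : E (diagonal ![a, b]) ≤ E (diagonal ![x, y]) := by
  obtain ⟨p, q, hpq, hxya⟩ := exists_sq_add_sq_eq_one_of_mem_uIcc hmem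
  have hab : x * y / a = b := by rw [hxy]; field_simp
  have hτ := hiso.apply_upperTriangular hx hy ha hpq (by linear_combination hxya)
  have hτ' := hiso.apply_upperTriangular (p := p) (q := -q) hx hy ha (by linear_combination hpq)
    (by linear_combination hxya)
  set τ := p * q * (y ^ 2 - x ^ 2) / a
  rw [hab] at hτ hτ'
  rw [show p * -q * (y ^ 2 - x ^ 2) / a = -τ by ring] at hτ'
  have hmid : (0 : ℝ) ∈ segment ℝ (-τ) τ :=
    ⟨1 / 2, 1 / 2, by norm_num, by norm_num, by norm_num, by ring⟩
  calc E (diagonal ![a, b]) = E !![a, 0; 0, b] := by rw [diagonal_vec2]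
    _ ≤ max (E !![a, -τ; 0, b]) (E !![a, τ; 0, b]) :=
      (hrc.convexOn_upperTriangular ha hb).le_on_segment trivial trivial hmid
    _ = E (diagonal ![x, y]) := by rw [hτ, hτ', max_self]

lemma diagonal_le_diagonal_mul_exp (hrc : RankOneConvexOnPos E) (hiso : IsotropicOnPos E)
    {a b s : ℝ} (ha : 0 < a) (hb : 0 < b) (hs : 0 ≤ s * (a - b)) :
    E (diagonal ![a, b]) ≤ E (diagonal ![a * Real.exp s, b * Real.exp (-s)]) := by
  refine diagonal_le_diagonal_of_mul_eq hrc hiso ha hb (by positivity) (by positivity)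
    (by rw [Real.exp_neg]; field_simp) ?_
  rw [mem_uIcc]
  rcases lt_trichotomy s 0 with hs' | rfl | hs'
  · have hab : a ≤ b := by nlinarith
    have h1 : Real.exp s ≤ 1 := Real.exp_le_one_iff.mpr hs'.le
    have h2 : 1 ≤ Real.exp (-s) := Real.one_le_exp (by linarith)
    left; constructor <;> gcongr <;> nlinarith
  · simpa using le_total _ _
  · have hab : b ≤ a := by nlinarith
    have h1 : 1 ≤ Real.exp s := Real.one_le_exp hs'.le
    have h2 : Real.exp (-s) ≤ 1 := Real.exp_le_one_iff.mpr (by linarith)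
    right; constructor <;> gcongr <;> nlinarith

end Functional

theorem stmt5 (E : Matrix (Fin 2) (Fin 2) ℝ → ℝ)
    (hrc : RankOneConvexOnPos E)
    (hiso : ∀ (Q R A : Matrix (Fin 2) (Fin 2) ℝ), Qᵀ * Q = 1 → Q.det = 1 →
      Rᵀ * R = 1 → R.det = 1 → 0 < A.det → E (Q * A * R) = E A)
    (Φ : ℝ × ℝ → ℝ) (hΦdef : ∀ x y : ℝ, Φ (x, y) = E (Matrix.diagonal ![x, y]))
    (hΦ : ContDiffOn ℝ 1 Φ (Set.Ioi 0 ×ˢ Set.Ioi 0))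
    (l₁ l₂ : ℝ) (h1 : 0 < l₁) (h2 : 0 < l₂) :
    0 ≤ (l₁ * fderiv ℝ Φ (l₁, l₂) (1, 0) - l₂ * fderiv ℝ Φ (l₁, l₂) (0, 1)) * (l₁ - l₂) := by
  have hΦ' : HasFDerivAt Φ (fderiv ℝ Φ (l₁, l₂)) (l₁, l₂) :=
    ((hΦ.contDiffAt (prod_mem_nhds (Ioi_mem_nhds h1) (Ioi_mem_nhds h2))).differentiableAt
      one_ne_zero).hasFDerivAt
  have hcurve : HasDerivAt (fun s ↦ (l₁ * Real.exp s, l₂ * Real.exp (-s))) (l₁, -l₂) 0 := by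
    simpa using ((Real.hasDerivAt_exp 0).const_mul l₁).prodMk
      (((Real.hasDerivAt_exp (-0)).comp 0 (hasDerivAt_neg 0)).const_mul l₂)
  have hderiv := hΦ'.comp_hasDerivAt_of_eq 0 hcurve (by simp)
  have hlin : fderiv ℝ Φ (l₁, l₂) (l₁, -l₂)
      = l₁ * fderiv ℝ Φ (l₁, l₂) (1, 0) - l₂ * fderiv ℝ Φ (l₁, l₂) (0, 1) := by
    have : ((l₁, -l₂) : ℝ × ℝ) = l₁ • (1, 0) - l₂ • (0, 1) := by simp
    rw [this, map_sub, map_smul, map_smul, smul_eq_mul, smul_eq_mul]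
  rw [← hlin]
  refine hderiv.mul_nonneg_of_forall_le fun s hs ↦ ?_
  simp only [Function.comp_apply, hΦdef, Real.exp_zero, neg_zero, mul_one]
  exact diagonal_le_diagonal_mul_exp hrc hiso h1 h2 (by simpa using hs)
end

section
/- For every real p ≥ 2 and every w ∈ ℂ, |1 + w|^p ≥ 1 + p·Re(w) + (p/2)·|w|². Moreover the constant p/2 is the largest possible: for every c > p/2 there exists w ∈ ℂ with |1 + w|^p < 1 + p·Re(w) + c·|w|². -/
open MeasureTheory Matrix

/-!
Since `‖1 + w‖² = 1 + x` with `x = 2 Re w + ‖w‖² ≥ -1`, we have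
`‖1 + w‖ ^ p = (1 + x) ^ (p / 2)`, and Bernoulli's inequality
`(1 + x) ^ (p / 2) ≥ 1 + (p / 2) x` (valid as `p / 2 ≥ 1`) is the claim.
For sharpness take `w = i √t`: then `Re w = 0`, `‖w‖² = t`, and `(1 + t) ^ (p / 2) < 1 + c t`
for small `t > 0` because the left side has slope `p / 2 < c` at `t = 0`.
-/

theorem Complex.sq_norm_one_add (w : ℂ) : ‖1 + w‖ ^ 2 = 1 + (2 * w.re + ‖w‖ ^ 2) := by
  simp only [Complex.sq_norm, Complex.normSq_apply, Complex.add_re, Complex.add_im,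
    Complex.one_re, Complex.one_im]
  ring

theorem Real.rpow_eq_sq_rpow_half {x : ℝ} (hx : 0 ≤ x) (p : ℝ) :
    x ^ p = (x ^ 2) ^ (p / 2) := by
  rw [← Real.rpow_two, ← Real.rpow_mul hx]
  ring_nf

theorem Complex.norm_one_add_rpow (w : ℂ) (p : ℝ) :
    ‖1 + w‖ ^ p = (1 + (2 * w.re + ‖w‖ ^ 2)) ^ (p / 2) := by
  rw [Real.rpow_eq_sq_rpow_half (norm_nonneg _), Complex.sq_norm_one_add]

theorem exists_pos_rpow_one_add_lt {p c : ℝ} (hc : p < c) :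
    ∃ t : ℝ, 0 < t ∧ (1 + t) ^ p < 1 + c * t := by
  have hderiv : HasDerivAt (fun t : ℝ => (1 + t) ^ p) p 0 := by
    simpa using ((hasDerivAt_id (0 : ℝ)).const_add 1).rpow_const (p := p) (by norm_num)
  have hslope :
      ∀ᶠ t in nhdsWithin (0 : ℝ) (Set.Ioi 0), slope (fun t : ℝ => (1 + t) ^ p) 0 t < c :=
    ((hasDerivAt_iff_tendsto_slope.mp hderiv).eventually_lt_const hc).filter_mono
      (nhdsWithin_mono 0 fun t ht => (Set.mem_Ioi.mp ht).ne')
  obtain ⟨t, hlt, ht⟩ := (hslope.and self_mem_nhdsWithin).exists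
  refine ⟨t, ht, ?_⟩
  rw [slope_def_field, div_lt_iff₀ (by simpa using ht)] at hlt
  simp only [add_zero, Real.one_rpow, sub_zero] at hlt
  linarith

open MeasureTheory Matrix

theorem stmt6 (p : ℝ) (hp : 2 ≤ p) :
    (∀ w : ℂ, 1 + p * w.re + p / 2 * ‖w‖ ^ 2 ≤ ‖1 + w‖ ^ p) ∧
    (∀ c : ℝ, p / 2 < c → ∃ w : ℂ,
      ‖1 + w‖ ^ p < 1 + p * w.re + c * ‖w‖ ^ 2) := by
  constructor
  · intro w
    have hx : -1 ≤ 2 * w.re + ‖w‖ ^ 2 := by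
      nlinarith [Complex.sq_norm_one_add w, sq_nonneg ‖1 + w‖]
    have hbernoulli := one_add_mul_self_le_rpow_one_add hx (by linarith : 1 ≤ p / 2)
    rw [Complex.norm_one_add_rpow]
    linarith
  · intro c hc
    obtain ⟨t, ht, hlt⟩ := exists_pos_rpow_one_add_lt hc
    refine ⟨Complex.I * Real.sqrt t, ?_⟩
    have hnorm : ‖Complex.I * Real.sqrt t‖ ^ 2 = t := by
      simp [Real.sq_sqrt ht.le]
    rw [Complex.norm_one_add_rpow, hnorm]
    simpa using hlt
end

section
/- Let b₁ ∈ ℂ with |b₁| < 1 and let R(z) = z + b₁/z. Let g be holomorphic on {z ∈ ℂ : |z| > 1} and suppose g(z) = z + b₁/z + φ(z) there, where φ is holomorphic on {|z| > 1} and z·φ(z) → 0 as |z| → ∞. Then R is injective on {|z| > 1}, and the map h = g ∘ R⁻¹, defined and holomorphic on the open set R({|z| > 1}), satisfies h(z) = z + O(z⁻²) as |z| → ∞: there exist constants C, M > 0 such that |h(z) − z| ≤ C·|z|⁻² for every z ∈ R({|z| > 1}) with |z| ≥ M. -/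
open MeasureTheory Matrix

open MeasureTheory Matrix

/-!
Write `R z = z + b / z`. If `R z = R w` then `(z - w) (z w - b) = 0`, and `‖z w‖ > 1 > ‖b‖` on
`‖z‖, ‖w‖ > 1`, so `R` is injective there; its derivative `1 - b / z²` does not vanish there either,
so by the inverse function theorem `R` is open and its inverse is holomorphic on the image.

For the asymptotics, `ψ w = w⁻¹ φ (w⁻¹)` tends to `0` at the origin, so the singularity is removable
and `ψ w = O(w)`, i.e. `φ z = O(z⁻²)` at infinity. As `‖R z‖ ≤ ‖z‖ + 1`, this is `O((R z)⁻²)`, and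
`h (R z) - R z = φ z`.
-/

open Filter Topology Set Asymptotics Bornology

section Inverse

variable {𝕜 : Type*} [NontriviallyNormedField 𝕜] [CompleteSpace 𝕜] {f : 𝕜 → 𝕜} {s : Set 𝕜}

theorem hasStrictDerivAt_invFunOn {f' a : 𝕜} (hinj : InjOn f s) (hs : s ∈ 𝓝 a)
    (hf : HasStrictDerivAt f f' a) (hf' : f' ≠ 0) :
    HasStrictDerivAt (Function.invFunOn f s) f'⁻¹ (f a) := by
  have hF := hf.to_localInverse hf'
  have hF_mem : ∀ᶠ w in 𝓝 (f a), hf.localInverse f f' a hf' w ∈ s :=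
    hF.hasDerivAt.continuousAt.preimage_mem_nhds <| by
      rwa [(hf.eventually_left_inverse hf').self_of_nhds]
  refine hF.congr_of_eventuallyEq ?_
  filter_upwards [hf.eventually_right_inverse hf', hF_mem] with w hw hws
  rw [← hinj.leftInvOn_invFunOn hws, hw]

theorem isOpen_image_of_hasStrictDerivAt {f' : 𝕜 → 𝕜} (hs : IsOpen s)
    (hf : ∀ a ∈ s, HasStrictDerivAt f (f' a) a) (hf' : ∀ a ∈ s, f' a ≠ 0) :
    IsOpen (f '' s) := by
  rw [isOpen_iff_mem_nhds]
  rintro _ ⟨a, ha, rfl⟩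
  rw [← (hf a ha).map_nhds_eq (hf' a ha)]
  exact image_mem_map (hs.mem_nhds ha)

end Inverse

theorem isBigO_cobounded_inv_sq_of_tendsto_smul {E : Type*} [NormedAddCommGroup E]
    [NormedSpace ℂ E] [CompleteSpace E] {φ : ℂ → E}
    (hφ : ∀ᶠ z in cobounded ℂ, DifferentiableAt ℂ φ z)
    (hdecay : Tendsto (fun z => z • φ z) (cobounded ℂ) (𝓝 0)) :
    φ =O[cobounded ℂ] fun z => (z ^ 2)⁻¹ := by
  -- `w ↦ w⁻¹ • φ w⁻¹` vanishes at `0` (where `0⁻¹ = 0`) and is continuous there, hence analytic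
  set ψ : ℂ → E := fun w => w⁻¹ • φ w⁻¹
  have hψ_diff : ∀ᶠ w in 𝓝[≠] 0, DifferentiableAt ℂ ψ w := by
    filter_upwards [tendsto_inv₀_nhdsNE_zero.eventually hφ, self_mem_nhdsWithin] with w hw hw0
    exact (differentiableAt_inv hw0).smul (hw.comp w (differentiableAt_inv hw0))
  have hψ_cont : ContinuousAt ψ 0 := by
    rw [continuousAt_iff_punctured_nhds, show ψ 0 = 0 by simp [ψ]]
    exact hdecay.comp tendsto_inv₀_nhdsNE_zero
  have hψ : ψ =O[𝓝 0] fun w => w := by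
    simpa [ψ] using (Complex.analyticAt_of_differentiable_on_punctured_nhds_of_continuousAt
      hψ_diff hψ_cont).differentiableAt.isBigO_sub
  have hzφ : (fun z => z • φ z) =O[cobounded ℂ] fun z => z⁻¹ := by
    simpa [ψ, Function.comp_def] using hψ.comp_tendsto tendsto_inv₀_cobounded
  refine ((isBigO_refl (fun z : ℂ => z⁻¹) _).smul hzφ).congr' ?_ ?_
  · filter_upwards [eventually_ne_cobounded 0] with z hz
    simp [smul_smul, hz]
  · filter_upwards with z
    simp [pow_two]

section Joukowski

variable {b : ℂ}

theorem injOn_add_div (hb : ‖b‖ ≤ 1) : InjOn (fun z : ℂ => z + b / z) {z | 1 < ‖z‖} := by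
  intro z (hz : 1 < ‖z‖) w (hw : 1 < ‖w‖) h
  have hz0 : z ≠ 0 := norm_pos_iff.mp (one_pos.trans hz)
  have hw0 : w ≠ 0 := norm_pos_iff.mp (one_pos.trans hw)
  have hzw : z * w - b ≠ 0 := by
    refine sub_ne_zero.mpr fun hzwb => ?_
    have : 1 < ‖z * w‖ := by rw [norm_mul]; nlinarith
    exact (hzwb ▸ this).not_ge hb
  have key : (z - w) * (z * w - b) = 0 := by
    simp only at h
    field_simp at h
    linear_combination h
  exact sub_eq_zero.mp ((mul_eq_zero.mp key).resolve_right hzw)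

theorem hasStrictDerivAt_add_div {z : ℂ} (hz : z ≠ 0) :
    HasStrictDerivAt (fun z => z + b / z) (1 - b / z ^ 2) z := by
  have h : HasStrictDerivAt (fun z : ℂ => z + b * z⁻¹) (1 + b * -(z ^ 2)⁻¹) z :=
    (hasStrictDerivAt_id z).add ((hasStrictDerivAt_inv hz).const_mul b)
  simpa only [div_eq_mul_inv, mul_neg, ← sub_eq_add_neg] using h

theorem one_sub_div_sq_ne_zero (hb : ‖b‖ ≤ 1) {z : ℂ} (hz : 1 < ‖z‖) : 1 - b / z ^ 2 ≠ 0 := by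
  have hz0 : z ≠ 0 := norm_pos_iff.mp (one_pos.trans hz)
  rw [sub_ne_zero, ne_comm, Ne, div_eq_one_iff_eq (pow_ne_zero 2 hz0)]
  rintro rfl
  rw [norm_pow] at hb
  nlinarith

theorem norm_add_div_le (hb : ‖b‖ ≤ 1) {z : ℂ} (hz : 1 ≤ ‖z‖) : ‖z + b / z‖ ≤ ‖z‖ + 1 := by
  refine (norm_add_le _ _).trans (add_le_add_right ?_ _)
  rw [norm_div]
  exact div_le_one_of_le₀ (hb.trans hz) (norm_nonneg z)

theorem exists_bound_of_isBigO_inv_sq {E : Type*} [NormedAddCommGroup E] (hb : ‖b‖ ≤ 1)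
    {φ : ℂ → E}
    (hφ : φ =O[cobounded ℂ] fun z => (z ^ 2)⁻¹) :
    ∃ C > (0 : ℝ), ∃ M > (0 : ℝ), ∀ z : ℂ, 1 < ‖z‖ → M ≤ ‖z + b / z‖ →
      ‖φ z‖ ≤ C / ‖z + b / z‖ ^ 2 := by
  obtain ⟨c, hc, hφc⟩ := hφ.exists_pos
  obtain ⟨r, -, hr⟩ := hasBasis_cobounded_norm.eventually_iff.mp hφc.bound
  refine ⟨4 * c, by positivity, max (r + 1) 2, by positivity, fun z hz hM => ?_⟩
  set w := z + b / z
  have hwz : ‖w‖ ≤ ‖z‖ + 1 := norm_add_div_le hb hz.le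
  have hw2 : 2 ≤ ‖w‖ := (le_max_right _ _).trans hM
  have hzr : r ≤ ‖z‖ := by linarith [le_max_left (r + 1) 2]
  calc ‖φ z‖ ≤ c * ‖(z ^ 2)⁻¹‖ := hr hzr
    _ = c / ‖z‖ ^ 2 := by rw [norm_inv, norm_pow, div_eq_mul_inv]
    _ ≤ c / (‖w‖ / 2) ^ 2 := by gcongr; linarith
    _ = 4 * c / ‖w‖ ^ 2 := by ring

end Joukowski

theorem stmt8 (b : ℂ) (hb : ‖b‖ < 1)
    (R : ℂ → ℂ) (hR : ∀ z, R z = z + b / z)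
    (g φ : ℂ → ℂ)
    (hg : DifferentiableOn ℂ g {z : ℂ | 1 < ‖z‖})
    (hφ : DifferentiableOn ℂ φ {z : ℂ | 1 < ‖z‖})
    (hexp : ∀ z : ℂ, 1 < ‖z‖ → g z = z + b / z + φ z)
    (hdecay : Filter.Tendsto (fun z => z * φ z)
      (Filter.comap (fun z : ℂ => ‖z‖) Filter.atTop) (nhds 0)) :
    Set.InjOn R {z : ℂ | 1 < ‖z‖} ∧
    IsOpen (R '' {z : ℂ | 1 < ‖z‖}) ∧
    DifferentiableOn ℂ (fun w => g (Function.invFunOn R {z : ℂ | 1 < ‖z‖} w))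
      (R '' {z : ℂ | 1 < ‖z‖}) ∧
    ∃ C > (0:ℝ), ∃ M > (0:ℝ), ∀ w ∈ R '' {z : ℂ | 1 < ‖z‖}, M ≤ ‖w‖ →
      ‖g (Function.invFunOn R {z : ℂ | 1 < ‖z‖} w) - w‖
        ≤ C / ‖w‖ ^ 2 := by
  obtain rfl : R = fun z => z + b / z := funext hR
  set S : Set ℂ := {z : ℂ | 1 < ‖z‖}
  have hS : IsOpen S := isOpen_lt continuous_const continuous_norm
  have hinj := injOn_add_div hb.le
  have hderiv (z : ℂ) (hz : z ∈ S) :=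
    hasStrictDerivAt_add_div (b := b) (norm_pos_iff.mp (one_pos.trans hz))
  have hderiv_ne (z : ℂ) (hz : z ∈ S) := one_sub_div_sq_ne_zero hb.le hz
  refine ⟨hinj, isOpen_image_of_hasStrictDerivAt hS hderiv hderiv_ne, ?_, ?_⟩
  · refine hg.comp (fun w hw => ?_) (surjOn_image _ S).mapsTo_invFunOn
    obtain ⟨z, hz, rfl⟩ := hw
    exact (hasStrictDerivAt_invFunOn hinj (hS.mem_nhds hz) (hderiv z hz)
      (hderiv_ne z hz)).hasDerivAt.differentiableAt.differentiableWithinAt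
  · have hφ_diff : ∀ᶠ z in cobounded ℂ, DifferentiableAt ℂ φ z := by
      filter_upwards [eventually_cobounded_le_norm 2] with z hz
      exact hφ.differentiableAt (hS.mem_nhds (by change 1 < ‖z‖; linarith))
    obtain ⟨C, hC, M, hM, hbound⟩ := exists_bound_of_isBigO_inv_sq hb.le
      (isBigO_cobounded_inv_sq_of_tendsto_smul hφ_diff (by simpa using hdecay))
    refine ⟨C, hC, M, hM, ?_⟩
    rintro _ ⟨z, hz, rfl⟩ hzM
    rw [hinj.leftInvOn_invFunOn hz, hexp z hz, add_sub_cancel_left]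
    exact hbound z hz hzM
end

section
/- Let m, n ≥ 1 and let E : ℝ^{m×n} → ℝ ∪ {±∞} be rank-one convex, and suppose E(A₀) is finite for some A₀ in the topological interior of dom(E). Let 𝒰 be the connected component of the topological interior of dom(E) containing A₀. Then E(B) > −∞ for every B ∈ 𝒰, and more generally E(B + tX) > −∞ for every B ∈ 𝒰, every rank-one matrix X, and every t ∈ ℝ. -/
open MeasureTheory Matrix

open MeasureTheory Matrix

open Filter Topology Set

/-! If `E(P) = -∞` and the rank-one line through `P` and `Q` stays in `dom E` a little beyond `Q`,
the convex epigraph of `E` along that line contains points over `Q` at every height, so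
`E(Q) = -∞`. A box around an interior point of `dom E` can be crossed by such moves, changing
one row at a time, so `{E = -∞}` and `{E > -∞}` are both open in `int dom E`, and the connected
component of `A₀` lies in the second. Finally `B` is reached from `B + tX` by the rank-one move
`-tX`, ending at the interior point `B`. -/

theorem Matrix.eq_zero_of_rank_eq_zero {m n R : Type*} [Fintype m] [Fintype n] [DecidableEq n]
    [Field R] {A : Matrix m n R} (h : A.rank = 0) : A = 0 := by
  rw [Matrix.rank, Submodule.finrank_eq_zero, LinearMap.range_eq_bot] at h
  ext i j
  simpa using congr_fun (LinearMap.congr_fun h (Pi.single j 1)) i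

theorem Matrix.rank_smul_le {m n R : Type*} [Fintype n] [Field R] (c : R) (A : Matrix m n R) :
    (c • A).rank ≤ A.rank := by
  rcases eq_or_ne c 0 with rfl | hc
  · simp [Matrix.rank_zero]
  · exact (Matrix.rank_smul_of_mem_nonZeroDivisors A (mem_nonZeroDivisors_of_ne_zero hc)).le

theorem EReal.eq_bot_of_mem_openSegment {V : Type*} [AddCommGroup V] [Module ℝ V] {f : V → EReal}
    (hf : Convex ℝ {q : V × ℝ | f q.1 ≤ q.2}) {x y z : V} (hx : f x = ⊥) (hy : f y ≠ ⊤)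
    (hz : z ∈ openSegment ℝ x y) : f z = ⊥ := by
  obtain ⟨a, b, ha, hb, hab, rfl⟩ := hz
  refine (EReal.eq_bot_iff_forall_lt _).2 fun M => ?_
  set r := (f y).toReal
  -- `f x = ⊥` puts `(x, s)` in the epigraph at every height `s`; this `s` gives height `M - 1`
  have hmem := hf (x := (x, (M - 1 - b * r) / a)) (y := (y, r)) (by simp [hx])
    (EReal.le_coe_toReal hy) ha.le hb.le hab
  have hM : a * ((M - 1 - b * r) / a) + b * r = M - 1 := by field_simp; ring
  have hle : f (a • x + b • y) ≤ ((M - 1 : ℝ) : EReal) := by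
    simpa only [mem_ofPred_eq, Prod.smul_mk, Prod.mk_add_mk, smul_eq_mul, hM] using hmem
  exact hle.trans_lt (EReal.coe_lt_coe_iff.2 (sub_one_lt M))

namespace RankOneConvexE

variable {m n : ℕ} {E : Matrix (Fin m) (Fin n) ℝ → EReal}

theorem eq_bot_add_of_rank_le_one (hrc : RankOneConvexE E) {P X : Matrix (Fin m) (Fin n) ℝ}
    (hX : X.rank ≤ 1) (hP : E P = ⊥) (hPX : P + X ∈ interior {A | E A < ⊤}) : E (P + X) = ⊥ := by
  rcases Nat.le_one_iff_eq_zero_or_eq_one.1 hX with h0 | h1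
  · simpa [Matrix.eq_zero_of_rank_eq_zero h0] using hP
  have hline : Continuous fun s : ℝ => P + s • X := by fun_prop
  have hnear : ∀ᶠ s in 𝓝 (1 : ℝ), P + s • X ∈ interior {A | E A < ⊤} :=
    hline.continuousAt.preimage_mem_nhds (by simpa using isOpen_interior.mem_nhds hPX)
  obtain ⟨s, hs, hs1⟩ :=
    ((eventually_nhdsWithin_of_eventually_nhds hnear).and
      (self_mem_nhdsWithin (s := Ioi 1))).exists
  have h1s : (1 : ℝ) ∈ openSegment ℝ 0 s := by
    rw [openSegment_eq_Ioo (zero_lt_one.trans hs1)]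
    exact ⟨zero_lt_one, hs1⟩
  simpa using EReal.eq_bot_of_mem_openSegment (f := fun t => E (P + t • X)) (hrc P X h1)
    (by simpa using hP) (interior_subset hs).ne h1s

theorem eq_bot_of_mem_pi (hrc : RankOneConvexE E) {t : Fin m → Set (Fin n → ℝ)}
    (ht : univ.pi t ⊆ interior {A | E A < ⊤}) {C D : Matrix (Fin m) (Fin n) ℝ}
    (hC : C ∈ univ.pi t) (hD : D ∈ univ.pi t) (hCbot : E C = ⊥) : E D = ⊥ := by
  classical
  suffices ∀ s : Finset (Fin m), E (of fun i => if i ∈ s then D i else C i) = ⊥ by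
    convert this Finset.univ using 2
    ext
    simp
  intro s
  induction s using Finset.induction_on with
  | empty =>
    convert hCbot using 2
    ext
    simp
  | insert i s _ ih =>
    set P : Matrix (Fin m) (Fin n) ℝ := of fun k => if k ∈ s then D k else C k
    have hrow : (of fun k => if k ∈ insert i s then D k else C k)
        = P + vecMulVec (Pi.single i 1) (D i - P i) := by
      ext k j
      rcases eq_or_ne k i with rfl | hk
      · simp [P, vecMulVec_apply]
      · simp [P, vecMulVec_apply, hk]
    rw [hrow]
    refine hrc.eq_bot_add_of_rank_le_one (rank_vecMulVec_le _ _) ih ?_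
    rw [← hrow]
    refine ht fun k _ => ?_
    show (if k ∈ insert i s then D k else C k) ∈ t k
    split_ifs
    exacts [hD k trivial, hC k trivial]

theorem eventually_eq_bot_iff (hrc : RankOneConvexE E) {B : Matrix (Fin m) (Fin n) ℝ}
    (hB : B ∈ interior {A | E A < ⊤}) : ∀ᶠ C in 𝓝 B, (E C = ⊥ ↔ E B = ⊥) := by
  obtain ⟨t, ht, hsub⟩ := isOpen_pi_iff'.1 isOpen_interior B hB
  have hBt : B ∈ univ.pi t := fun i _ => (ht i).2
  have hbox : univ.pi t ∈ 𝓝 B :=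
    (isOpen_set_pi finite_univ fun i _ => (ht i).1).mem_nhds hBt
  filter_upwards [hbox] with C hC
  exact ⟨hrc.eq_bot_of_mem_pi hsub hC hBt, hrc.eq_bot_of_mem_pi hsub hBt hC⟩

theorem ne_bot_of_mem_connectedComponentIn (hrc : RankOneConvexE E)
    {A₀ B : Matrix (Fin m) (Fin n) ℝ} (hA₀ : E A₀ ≠ ⊥)
    (hB : B ∈ connectedComponentIn (interior {A | E A < ⊤}) A₀) : E B ≠ ⊥ := by
  set S := interior {A : Matrix (Fin m) (Fin n) ℝ | E A < ⊤}
  have hA₀S : A₀ ∈ S := connectedComponentIn_nonempty_iff.1 ⟨B, hB⟩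
  have hbot : IsOpen (S ∩ {A | E A = ⊥}) := isOpen_iff_mem_nhds.2 fun C hC =>
    inter_mem (isOpen_interior.mem_nhds hC.1)
      ((hrc.eventually_eq_bot_iff hC.1).mono fun _ h => h.2 hC.2)
  have hne : IsOpen (S ∩ {A | E A ≠ ⊥}) := isOpen_iff_mem_nhds.2 fun C hC =>
    inter_mem (isOpen_interior.mem_nhds hC.1)
      ((hrc.eventually_eq_bot_iff hC.1).mono fun _ h => mt h.1 hC.2)
  have hsub : connectedComponentIn S A₀ ⊆ S ∩ {A | E A ≠ ⊥} :=
    isPreconnected_connectedComponentIn.subset_left_of_subset_union hne hbot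
      (disjoint_left.2 fun _ h h' => h.2 h'.2)
      (fun C hC => (em (E C = ⊥)).elim (fun h => .inr ⟨connectedComponentIn_subset _ _ hC, h⟩)
        fun h => .inl ⟨connectedComponentIn_subset _ _ hC, h⟩)
      ⟨A₀, mem_connectedComponentIn hA₀S, hA₀S, hA₀⟩
  exact (hsub hB).2

end RankOneConvexE

theorem stmt16_general {m n : ℕ}
    (E : Matrix (Fin m) (Fin n) ℝ → EReal) (hrc : RankOneConvexE E)
    (A₀ : Matrix (Fin m) (Fin n) ℝ)
    (hfin : E A₀ ≠ ⊤ ∧ E A₀ ≠ ⊥) :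
    (∀ B ∈ connectedComponentIn
        (interior {A : Matrix (Fin m) (Fin n) ℝ | E A < ⊤}) A₀, E B ≠ ⊥) ∧
    (∀ B ∈ connectedComponentIn
        (interior {A : Matrix (Fin m) (Fin n) ℝ | E A < ⊤}) A₀,
      ∀ X : Matrix (Fin m) (Fin n) ℝ, X.rank = 1 → ∀ t : ℝ, E (B + t • X) ≠ ⊥) := by
  have hU B (hB : B ∈ connectedComponentIn (interior {A | E A < ⊤}) A₀) : E B ≠ ⊥ :=
    hrc.ne_bot_of_mem_connectedComponentIn hfin.2 hB
  refine ⟨hU, fun B hB X hX t hbot => hU B hB ?_⟩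
  simpa using hrc.eq_bot_add_of_rank_le_one ((rank_smul_le (-t) X).trans hX.le) hbot
    (by simpa using connectedComponentIn_subset _ _ hB)

theorem stmt16 {m n : ℕ} (hm : 1 ≤ m) (hn : 1 ≤ n)
    (E : Matrix (Fin m) (Fin n) ℝ → EReal) (hrc : RankOneConvexE E)
    (A₀ : Matrix (Fin m) (Fin n) ℝ)
    (hA₀ : A₀ ∈ interior {A : Matrix (Fin m) (Fin n) ℝ | E A < ⊤})
    (hfin : E A₀ ≠ ⊤ ∧ E A₀ ≠ ⊥) :
    (∀ B ∈ connectedComponentIn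
        (interior {A : Matrix (Fin m) (Fin n) ℝ | E A < ⊤}) A₀, E B ≠ ⊥) ∧
    (∀ B ∈ connectedComponentIn
        (interior {A : Matrix (Fin m) (Fin n) ℝ | E A < ⊤}) A₀,
      ∀ X : Matrix (Fin m) (Fin n) ℝ, X.rank = 1 → ∀ t : ℝ, E (B + t • X) ≠ ⊥) :=
  stmt16_general E hrc A₀ hfin
end

section
/- The functional 𝒲 is not polyconvex: there is no convex function Φ : ℝ^{2×2} × ℝ → ℝ ∪ {+∞} such that 𝒲(A) = Φ(A, det A) for every real 2×2 matrix A with det A > 0. -/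
open MeasureTheory Matrix

open MeasureTheory Matrix

/-!
A polyconvex functional satisfies Jensen's inequality along every finite probability
distribution of matrices on which the determinant is affine. Weights `t, (1-t)/2, (1-t)/2`
on `ε I, diag(3, 1), diag(1, 3)` have this property exactly when `t (2 - ε)² = 1`; for
`ε = 1/4` this gives `t = 16/49` and barycentre `(10/7) I`. Since
`𝒲(diag(a, b)) = max a b / min a b + 2 log (min a b)`, Jensen would give
`1 + 2 log (10/7) ≤ 16/49 ⋅ (1 - 4 log 2) + 33/49 ⋅ 3`, which is false.
-/

lemma map_sum_le_of_convex_epigraph {E ι : Type*} [AddCommGroup E] [Module ℝ E] {Φ : E → EReal}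
    (hΦ : Convex ℝ {q : E × ℝ | Φ q.1 ≤ (q.2 : EReal)}) {s : Finset ι} {w : ι → ℝ}
    {x : ι → E} {y : ι → ℝ} (hw₀ : ∀ i ∈ s, 0 ≤ w i) (hw₁ : ∑ i ∈ s, w i = 1)
    (hxy : ∀ i ∈ s, Φ (x i) ≤ (y i : EReal)) :
    Φ (∑ i ∈ s, w i • x i) ≤ ((∑ i ∈ s, w i * y i : ℝ) : EReal) := by
  simpa [Prod.fst_sum, Prod.snd_sum] using
    hΦ.sum_mem (z := fun i => (x i, y i)) hw₀ hw₁ hxy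

theorem Polyconvex.map_sum_le {F : Matrix (Fin 2) (Fin 2) ℝ → ℝ} (hF : Polyconvex F)
    {ι : Type*} {s : Finset ι} {w : ι → ℝ} {A : ι → Matrix (Fin 2) (Fin 2) ℝ}
    (hw₀ : ∀ i ∈ s, 0 ≤ w i) (hw₁ : ∑ i ∈ s, w i = 1) (hA : ∀ i ∈ s, 0 < (A i).det)
    (hdet : (∑ i ∈ s, w i • A i).det = ∑ i ∈ s, w i * (A i).det) :
    F (∑ i ∈ s, w i • A i) ≤ ∑ i ∈ s, w i * F (A i) := by
  obtain ⟨Φ, -, hΦ, hΦF⟩ := hF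
  have hpos : 0 < (∑ i ∈ s, w i • A i).det := by
    obtain ⟨j, hj, hwj⟩ := Finset.exists_lt_of_sum_lt (s := s) (f := 0) (g := w) (by simp [hw₁])
    rw [hdet]
    exact Finset.sum_pos' (fun i hi => mul_nonneg (hw₀ i hi) (hA i hi).le)
      ⟨j, hj, mul_pos hwj (hA j hj)⟩
  have hJensen := map_sum_le_of_convex_epigraph hΦ (x := fun i => (A i, (A i).det))
    (y := fun i => F (A i)) hw₀ hw₁ (fun i hi => (hΦF (A i) (hA i hi)).le)
  have hbary : ∑ i ∈ s, w i • (A i, (A i).det) =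
      (∑ i ∈ s, w i • A i, (∑ i ∈ s, w i • A i).det) :=
    Prod.ext (by simp [Prod.fst_sum]) (by simp [Prod.snd_sum, hdet])
  rw [hbary, hΦF _ hpos] at hJensen
  exact_mod_cast hJensen

lemma opNorm_diagonal (v : Fin 2 → ℝ) : opNorm (diagonal v) = ‖v‖ :=
  open scoped Matrix.Norms.L2Operator in l2_opNorm_diagonal v

lemma Wfun_diagonal {a b : ℝ} (ha : 0 < a) (hb : 0 < b) :
    Wfun (diagonal ![a, b]) = max a b / min a b + 2 * Real.log (min a b) := by
  have hnorm : opNorm (diagonal ![a, b]) = max a b := by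
    simp [opNorm_diagonal, Pi.norm_def, Fin.univ_succ, abs_of_pos ha, abs_of_pos hb]
  have hdet : (diagonal ![a, b]).det = max a b * min a b := by
    simp [det_diagonal, Fin.prod_univ_two, max_mul_min]
  have hmin : 0 < min a b := lt_min ha hb
  have hmax : 0 < max a b := lt_max_of_lt_left ha
  rw [Wfun, hnorm, hdet, show max a b ^ 2 / (max a b * min a b) = max a b / min a b by
    field_simp, Real.log_div hmax.ne' hmin.ne', Real.log_mul hmax.ne' hmin.ne']
  ring

theorem stmt19 :
    ¬ ∃ Φ : Matrix (Fin 2) (Fin 2) ℝ × ℝ → EReal,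
      (∀ q, Φ q ≠ ⊥) ∧
      Convex ℝ {q : (Matrix (Fin 2) (Fin 2) ℝ × ℝ) × ℝ | Φ q.1 ≤ (q.2 : EReal)} ∧
      ∀ A : Matrix (Fin 2) (Fin 2) ℝ, 0 < A.det → Φ (A, A.det) = (Wfun A : EReal) := by
  intro hW
  have hbary : (16 / 49 : ℝ) • diagonal ![(1 / 4 : ℝ), 1 / 4] + (33 / 98 : ℝ) • diagonal ![3, 1]
      + (33 / 98 : ℝ) • diagonal ![1, 3] = diagonal ![10 / 7, 10 / 7] := by
    simp only [← diagonal_smul, diagonal_add]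
    congr 1
    ext i; fin_cases i <;> norm_num
  have hJensen := Polyconvex.map_sum_le (F := Wfun) hW (s := Finset.univ)
    (w := ![16 / 49, 33 / 98, 33 / 98])
    (A := ![diagonal ![(1 / 4 : ℝ), 1 / 4], diagonal ![3, 1], diagonal ![1, 3]])
    (by norm_num [Fin.forall_fin_succ]) (by simp [Fin.sum_univ_three]; norm_num)
    (by norm_num [Fin.forall_fin_succ, det_diagonal])
    (by simp only [Fin.sum_univ_three, cons_val, hbary]; simp [det_diagonal]; norm_num)
  simp only [Fin.sum_univ_three, cons_val, hbary] at hJensen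
  simp (disch := norm_num) only [Wfun_diagonal] at hJensen
  norm_num at hJensen
  have hlog_quarter : Real.log (1 / 4) = -(2 * Real.log 2) := by
    rw [one_div, Real.log_inv, show (4 : ℝ) = 2 ^ 2 by norm_num, Real.log_pow]
    push_cast; ring
  have hlog_ten_sevenths : 3 / 10 ≤ Real.log (10 / 7) := by
    have := Real.one_sub_inv_le_log_of_pos (x := 10 / 7) (by norm_num)
    norm_num at this; linarith
  linarith [Real.log_two_gt_d9]
end
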